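/- arXiv:2107.10618 — 3 statements merged into one kernel-verified Lean document; each statement's English description precedes it below -/
import Mathlib

section
/- The function e_kin(ρ, m, M) := (d/2)·λ_max(m⊗m/ρ − M) is convex on ℝ⁺ × ℝ^d × S₀^d, where λ_max denotes the largest eigenvalue of a symmetric matrix. -/
/-!
For a fixed unit vector `v`, the quadratic form `v ⬝ (ρ⁻¹ m mᵀ - M) v = (m ⬝ v)² / ρ - v ⬝ M v`
is jointly convex on `ρ > 0`: it is the perspective `(ρ, t) ↦ t² / ρ` of the square, evaluated
at the linear function `(ρ, m ⬝ v)`, minus a function linear in `M`. The largest eigenvalue is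
the supremum of these forms over unit vectors, and a supremum of convex functions is convex.
-/

open Matrix

/-- Largest eigenvalue of a symmetric matrix, as the supremum of the quadratic
form over unit vectors. -/
noncomputable def lamMax {d : ℕ} (M : Matrix (Fin d) (Fin d) ℝ) : ℝ :=
  sSup {r : ℝ | ∃ v : Fin d → ℝ, v ⬝ᵥ v = 1 ∧ v ⬝ᵥ M.mulVec v = r}

/-- Generalised kinetic energy density e_kin(ρ,m,M) := (d/2)·λ_max(m⊗m/ρ − M). -/
noncomputable def eKin {d : ℕ} (ρ : ℝ) (m : Fin d → ℝ) (M : Matrix (Fin d) (Fin d) ℝ) : ℝ :=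
  ((d : ℝ) / 2) * lamMax (ρ⁻¹ • vecMulVec m m - M)

theorem convexOn_sq_div_fst : ConvexOn ℝ {p : ℝ × ℝ | 0 < p.1} fun p => p.2 ^ 2 / p.1 := by
  refine ⟨(convex_Ioi 0).linear_preimage (LinearMap.fst ℝ ℝ ℝ), ?_⟩
  rintro ⟨ρ₁, t₁⟩ (hρ₁ : 0 < ρ₁) ⟨ρ₂, t₂⟩ (hρ₂ : 0 < ρ₂) a b ha hb hab
  -- with `tᵢ = uᵢ ρᵢ` the gap is `a b ρ₁ ρ₂ (u₁ - u₂)² / (a ρ₁ + b ρ₂)`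
  obtain ⟨u₁, rfl⟩ : ∃ u, t₁ = u * ρ₁ := ⟨t₁ / ρ₁, by field_simp⟩
  obtain ⟨u₂, rfl⟩ : ∃ u, t₂ = u * ρ₂ := ⟨t₂ / ρ₂, by field_simp⟩
  have hρ : 0 < a * ρ₁ + b * ρ₂ := convex_Ioi (0 : ℝ) hρ₁ hρ₂ ha hb hab
  simp only [Prod.smul_mk, Prod.mk_add_mk, smul_eq_mul]
  rw [div_le_iff₀ hρ]
  field_simp
  nlinarith [mul_nonneg (mul_nonneg ha hb)
    (mul_nonneg (mul_nonneg hρ₁.le hρ₂.le) (sq_nonneg (u₁ - u₂)))]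

section lamMax

variable {d : ℕ}

theorem bddAbove_dotProduct_mulVec_self (A : Matrix (Fin d) (Fin d) ℝ) :
    BddAbove {r : ℝ | ∃ v : Fin d → ℝ, v ⬝ᵥ v = 1 ∧ v ⬝ᵥ A *ᵥ v = r} := by
  refine ((isCompact_sphere (0 : EuclideanSpace ℝ (Fin d)) 1).bddAbove_image
    (f := fun x => x.ofLp ⬝ᵥ A *ᵥ x.ofLp) (by fun_prop)).mono ?_
  rintro _ ⟨v, hv, rfl⟩
  refine ⟨WithLp.toLp 2 v, ?_, rfl⟩
  rw [dotProduct] at hv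
  simp [EuclideanSpace.norm_eq, sq, hv]

theorem dotProduct_mulVec_le_lamMax {A : Matrix (Fin d) (Fin d) ℝ} {v : Fin d → ℝ}
    (hv : v ⬝ᵥ v = 1) : v ⬝ᵥ A *ᵥ v ≤ lamMax A :=
  le_csSup (bddAbove_dotProduct_mulVec_self A) ⟨v, hv, rfl⟩

theorem lamMax_le {A : Matrix (Fin d) (Fin d) ℝ} {c : ℝ} (hd : 0 < d)
    (h : ∀ v : Fin d → ℝ, v ⬝ᵥ v = 1 → v ⬝ᵥ A *ᵥ v ≤ c) : lamMax A ≤ c :=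
  csSup_le ⟨_, Pi.single ⟨0, hd⟩ 1, by simp, rfl⟩ fun _ ⟨v, hv, hr⟩ => hr ▸ h v hv

theorem convexOn_lamMax_comp {E : Type*} [AddCommGroup E] [Module ℝ E] {s : Set E}
    {A : E → Matrix (Fin d) (Fin d) ℝ} (hd : 0 < d)
    (hA : ∀ v : Fin d → ℝ, ConvexOn ℝ s fun z => v ⬝ᵥ A z *ᵥ v) :
    ConvexOn ℝ s fun z => lamMax (A z) := by
  refine ⟨(hA 0).1, fun x hx y hy a b ha hb hab => lamMax_le hd fun v hv => ?_⟩
  calc v ⬝ᵥ A (a • x + b • y) *ᵥ v ≤ a * (v ⬝ᵥ A x *ᵥ v) + b * (v ⬝ᵥ A y *ᵥ v) :=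
        (hA v).2 hx hy ha hb hab
    _ ≤ a * lamMax (A x) + b * lamMax (A y) := by
        gcongr <;> exact dotProduct_mulVec_le_lamMax hv

end lamMax

theorem dotProduct_mulVec_smul_vecMulVec_sub {d : ℕ} (ρ : ℝ) (m v : Fin d → ℝ)
    (M : Matrix (Fin d) (Fin d) ℝ) :
    v ⬝ᵥ (ρ⁻¹ • vecMulVec m m - M) *ᵥ v = (m ⬝ᵥ v) ^ 2 / ρ - v ⬝ᵥ M *ᵥ v := by
  rw [sub_mulVec, smul_mulVec, vecMulVec_mulVec, op_smul_eq_smul, dotProduct_sub, dotProduct_smul,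
    dotProduct_smul, dotProduct_comm v m, smul_eq_mul, smul_eq_mul]
  ring

theorem convexOn_dotProduct_mulVec_smul_vecMulVec_sub {d : ℕ} (v : Fin d → ℝ) :
    ConvexOn ℝ {z : ℝ × (Fin d → ℝ) × Matrix (Fin d) (Fin d) ℝ | 0 < z.1}
      fun z => v ⬝ᵥ (z.1⁻¹ • vecMulVec z.2.1 z.2.1 - z.2.2) *ᵥ v := by
  refine ⟨(convex_Ioi 0).linear_preimage (LinearMap.fst _ _ _), fun x hx y hy a b ha hb hab => ?_⟩
  have h := convexOn_sq_div_fst.2 (x := (x.1, x.2.1 ⬝ᵥ v)) (y := (y.1, y.2.1 ⬝ᵥ v)) hx hy ha hb hab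
  simp only [Prod.smul_mk, Prod.mk_add_mk, Prod.fst_add, Prod.smul_fst, Prod.snd_add,
    Prod.smul_snd, smul_eq_mul, dotProduct_mulVec_smul_vecMulVec_sub, add_dotProduct,
    smul_dotProduct, add_mulVec, smul_mulVec, dotProduct_add, dotProduct_smul] at h ⊢
  linarith

theorem convex_setOf_fst_pos_isSymm_trace_eq_zero {E n : Type*} [AddCommGroup E] [Module ℝ E]
    [Fintype n] :
    Convex ℝ {z : ℝ × E × Matrix n n ℝ | 0 < z.1 ∧ z.2.2.IsSymm ∧ z.2.2.trace = 0} := by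
  rintro x ⟨hx₁, hx₂, hx₃⟩ y ⟨hy₁, hy₂, hy₃⟩ a b ha hb hab
  exact ⟨convex_Ioi (0 : ℝ) hx₁ hy₁ ha hb hab, (hx₂.smul a).add (hy₂.smul b),
    by simp [trace_add, trace_smul, hx₃, hy₃]⟩

/-- e_kin is convex on ℝ⁺ × ℝ^d × S₀^d. -/
theorem eKin_convexOn {d : ℕ} (hd : 2 ≤ d) :
    ConvexOn ℝ
      {z : ℝ × (Fin d → ℝ) × Matrix (Fin d) (Fin d) ℝ |
        0 < z.1 ∧ z.2.2.IsSymm ∧ z.2.2.trace = 0}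
      (fun z => eKin z.1 z.2.1 z.2.2) := by
  have hlamMax := convexOn_lamMax_comp (by omega : 0 < d)
    convexOn_dotProduct_mulVec_smul_vecMulVec_sub
  exact (hlamMax.subset (fun z hz => hz.1) convex_setOf_fst_pos_isSymm_trace_eq_zero).smul
    (by positivity : (0 : ℝ) ≤ d / 2)
end

section
/- Let a, b ∈ ℝ^d with |a| = |b|, d ≥ 2. Then the (d+1)×(d+1) matrix with block form [[a−b, a⊗a − b⊗b],[0, (a−b)ᵀ]] (first column a−b over 0, remaining block a⊗a−b⊗b over row vector (a−b)ᵀ) has determinant zero. -/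
/-! The matrix is `u uᵀ - v vᵀ` for `u = (a, 1)` and `v = (b, 1)` in `ℝ^(d+1)`, so it factors
through `ℝ²`; its rank is at most `2 < d + 1`. -/

namespace Matrix

variable {m n R : Type*}

theorem det_mul_eq_zero_of_card_lt [Fintype m] [Fintype n] [DecidableEq m] [CommRing R]
    [IsDomain R] (U : Matrix m n R) (W : Matrix n m R) (h : Fintype.card n < Fintype.card m) :
    (U * W).det = 0 := by
  by_contra hdet
  have hrank := rank_of_det_ne_zero hdet
  have := (rank_mul_le_left U W).trans (rank_le_card_width U)
  omega

theorem vecMulVec_sub_vecMulVec_eq_mul [CommRing R] (u v u' v' : m → R) :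
    vecMulVec u v - vecMulVec u' v' = (of fun i => ![u i, u' i]) * of ![v, -v'] := by
  ext i j
  simp [mul_apply, Fin.sum_univ_two, vecMulVec_apply, sub_eq_add_neg]

theorem det_vecMulVec_sub_vecMulVec [Fintype m] [DecidableEq m] [CommRing R] [IsDomain R]
    (h : 2 < Fintype.card m) (u v u' v' : m → R) :
    (vecMulVec u v - vecMulVec u' v').det = 0 := by
  rw [vecMulVec_sub_vecMulVec_eq_mul]
  exact det_mul_eq_zero_of_card_lt _ _ (by simpa using h)

theorem vecMulVec_sumElim_one_sub_vecMulVec_sumElim_one {ι : Type*} [CommRing R]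
    (a b : n → R) :
    vecMulVec (Sum.elim a (1 : ι → R)) (Sum.elim a 1)
        - vecMulVec (Sum.elim b (1 : ι → R)) (Sum.elim b 1) =
      fromBlocks (vecMulVec a a - vecMulVec b b) (replicateCol ι (a - b))
        (replicateRow ι (a - b)) 0 := by
  ext (i | i) (j | j) <;> simp [vecMulVec_apply]

end Matrix

open Matrix

/-- The paper's first column `(a − b, 0)` is placed last here; permuting columns only changes
the sign of the determinant. -/
theorem wave_matrix_det_zero_general {d : ℕ} (hd : 2 ≤ d) (a b : Fin d → ℝ) :
    (Matrix.fromBlocks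
        (vecMulVec a a - vecMulVec b b) (Matrix.replicateCol (Fin 1) (a - b))
        (Matrix.replicateRow (Fin 1) (a - b)) (0 : Matrix (Fin 1) (Fin 1) ℝ)).det = 0 := by
  rw [← vecMulVec_sumElim_one_sub_vecMulVec_sumElim_one]
  refine det_vecMulVec_sub_vecMulVec ?_ _ _ _ _
  rw [Fintype.card_sum, Fintype.card_fin, Fintype.card_fin]
  omega

/-- for |a| = |b| the wave matrix
[[a−b, a⊗a−b⊗b],[0,(a−b)ᵀ]] (written here with the "time" column moved to the
last position, a permutation of columns which does not affect vanishing of the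
determinant) has determinant zero. -/
theorem wave_matrix_det_zero {d : ℕ} (hd : 2 ≤ d) (a b : Fin d → ℝ)
    (hab : a ⬝ᵥ a = b ⬝ᵥ b) :
    (Matrix.fromBlocks
        (vecMulVec a a - vecMulVec b b) (Matrix.replicateCol (Fin 1) (a - b))
        (Matrix.replicateRow (Fin 1) (a - b)) (0 : Matrix (Fin 1) (Fin 1) ℝ)).det = 0 :=
  wave_matrix_det_zero_general hd a b
end

section
/- Let h : ℝ → ℝ be a bounded L-periodic function, and ξ = (ξ₀, ξ') ∈ ℝ × ℝ^d with ξ' ≠ 0. Then for every continuous f : ℝ → ℝ and every φ ∈ L¹(ℝ^d), lim_{n→∞} sup_{t∈ℝ} | ∫_{ℝ^d} φ(x) f(h(n(tξ₀ + x·ξ'))) dx − (∫_{ℝ^d} φ dx)·(1/L)∫₀^L f(h(s)) ds | = 0. -/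
/-!
Write `g = f ∘ h` (bounded, measurable, `L`-periodic), `M` for its mean over a period, `ℓ` for the
linear form `x ↦ ⟪x, ξ'⟫` and `e` for a vector with `ℓ e = 1`. For frequency `k` put
`J u = ∫ φ x * g (k * (ℓ x + u) + b)`. Translating `x` by `u • e` turns `J u - J 0` into an
integral of `(φ (· - u • e) - φ) * g (k * ℓ · + b)`, so `|J u - J 0| ≤ C ‖φ (· - u • e) - φ‖₁`,
which is small for all `u ∈ (0, L / k]` once `k` is large, by continuity of translation in `L¹`.
On the other hand, by Fubini and periodicity the average of `J` over `(0, L / k]` is exactly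
`(∫ φ) * M`. Neither estimate depends on `b = k * t * ξ0`, whence the uniformity in `t`.
-/

open MeasureTheory Filter Topology

theorem MeasureTheory.Integrable.tendsto_integral_norm_comp_add_sub {G F : Type*} [AddGroup G]
    [TopologicalSpace G] [IsTopologicalAddGroup G] [MeasurableSpace G] [BorelSpace G]
    {μ : Measure G} [IsLocallyFiniteMeasure μ] [μ.InnerRegularCompactLTTop] [μ.IsAddLeftInvariant]
    [NormedAddCommGroup F] {φ : G → F} (hφ : Integrable φ μ) :
    Tendsto (fun v => ∫ x, ‖φ (v + x) - φ x‖ ∂μ) (𝓝 0) (𝓝 0) := by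
  have : Fact ((1 : ENNReal) ≠ ⊤) := ⟨ENNReal.one_ne_top⟩
  have hm : MemLp φ 1 μ := memLp_one_iff_integrable.2 hφ
  have hT : Continuous fun v : G => DomAddAct.mk v +ᵥ hm.toLp φ :=
    continuous_vadd.comp (DomAddAct.continuous_mk.prodMk continuous_const)
  have hdist : ∀ v, dist (DomAddAct.mk v +ᵥ hm.toLp φ) (hm.toLp φ) = ∫ x, ‖φ (v + x) - φ x‖ ∂μ := by
    intro v
    rw [DomAddAct.mk_vadd_toLp, dist_eq_norm, ← MemLp.toLp_sub, L1.norm_eq_integral_norm]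
    refine integral_congr_ae ?_
    filter_upwards [MemLp.coeFn_toLp (f := (fun x => φ (v +ᵥ x)) - φ)
      ((hm.comp_measurePreserving (measurePreserving_add_left μ v)).sub hm)] with x hx
    rw [hx]; rfl
  simpa [hdist] using (hT.tendsto 0).dist (tendsto_const_nhds (x := hm.toLp φ))

theorem Function.Periodic.setIntegral_Ioc_comp_mul_add {F : Type*} [NormedAddCommGroup F]
    [NormedSpace ℝ F] {g : ℝ → F} {L : ℝ} (hper : Function.Periodic g L) (hL : 0 ≤ L) {k : ℝ}
    (hk : 0 < k) (c : ℝ) :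
    ∫ u in Set.Ioc 0 (L / k), g (k * u + c) = k⁻¹ • ∫ s in Set.Ioc 0 L, g s := by
  rw [← intervalIntegral.integral_of_le (by positivity), ← intervalIntegral.integral_of_le hL,
    intervalIntegral.integral_comp_mul_add g hk.ne', mul_zero, zero_add,
    mul_div_cancel₀ L hk.ne', add_comm, hper.intervalIntegral_add_eq c 0, zero_add]

theorem MeasureTheory.Integrable.abs_integral_mul_le {α : Type*} [MeasurableSpace α]
    {μ : Measure α} {ψ v : α → ℝ} (hψ : Integrable ψ μ) {C : ℝ}
    (hC : ∀ x, |v x| ≤ C) : |∫ x, ψ x * v x ∂μ| ≤ C * ∫ x, |ψ x| ∂μ := by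
  rw [← integral_const_mul]
  refine norm_integral_le_of_norm_le (f := fun x => ψ x * v x) (hψ.abs.const_mul C)
    (ae_of_all _ fun x => ?_)
  rw [Real.norm_eq_abs, abs_mul, mul_comm]
  exact mul_le_mul_of_nonneg_right (hC x) (abs_nonneg _)

section PlaneWave

variable {E : Type*} [NormedAddCommGroup E] [NormedSpace ℝ E] [MeasurableSpace E] [BorelSpace E]
  {μ : Measure E} {φ : E → ℝ} {g : ℝ → ℝ} {C L k b : ℝ}

theorem integrable_prod_mul_comp_clm_add {ν : Measure ℝ} [IsFiniteMeasure ν] (hφ : Integrable φ μ)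
    (hg : Measurable g) (hC : ∀ s, |g s| ≤ C) (ℓ : E →L[ℝ] ℝ) :
    Integrable (fun p : E × ℝ => φ p.1 * g (k * (ℓ p.1 + p.2) + b)) (μ.prod ν) :=
  (hφ.comp_fst ν).mul_bdd (hg.comp (by fun_prop)).aestronglyMeasurable (ae_of_all _ fun p => hC _)

theorem integral_mul_comp_clm_add_eq_integral_translate [μ.IsAddLeftInvariant]
    (ℓ : E →L[ℝ] ℝ) {e : E} (he : ℓ e = 1) (u : ℝ) :
    ∫ x, φ x * g (k * (ℓ x + u) + b) ∂μ = ∫ x, φ (-(u • e) + x) * g (k * ℓ x + b) ∂μ := by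
  rw [← integral_add_left_eq_self _ (-(u • e))]
  simp [he]

theorem setIntegral_integral_mul_comp_clm_add [SFinite μ] (hφ : Integrable φ μ)
    (hg : Measurable g) (hC : ∀ s, |g s| ≤ C) (hper : Function.Periodic g L) (hL : 0 ≤ L)
    (hk : 0 < k) (ℓ : E →L[ℝ] ℝ) :
    ∫ u in Set.Ioc 0 (L / k), ∫ x, φ x * g (k * (ℓ x + u) + b) ∂μ
      = (∫ x, φ x ∂μ) * (k⁻¹ * ∫ s in Set.Ioc 0 L, g s) := by
  rw [← integral_integral_swap (integrable_prod_mul_comp_clm_add hφ hg hC ℓ), ← integral_mul_const]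
  refine integral_congr_ae (ae_of_all _ fun x => ?_)
  dsimp only
  rw [integral_const_mul, ← smul_eq_mul k⁻¹,
    ← hper.setIntegral_Ioc_comp_mul_add hL hk (k * ℓ x + b)]
  congr 2 with u
  ring_nf

theorem abs_integral_mul_comp_clm_sub_le [SFinite μ] [μ.IsAddLeftInvariant]
    (hφ : Integrable φ μ) (hg : Measurable g) (hC : ∀ s, |g s| ≤ C)
    (hper : Function.Periodic g L) (hL : 0 < L) (hk : 0 < k) (ℓ : E →L[ℝ] ℝ) {e : E}
    (he : ℓ e = 1) {η : ℝ}
    (hη : ∀ u ∈ Set.Ioc 0 (L / k), ∫ x, ‖φ (-(u • e) + x) - φ x‖ ∂μ ≤ η) :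
    |∫ x, φ x * g (k * ℓ x + b) ∂μ - (∫ x, φ x ∂μ) * ((1 / L) * ∫ s in Set.Ioc 0 L, g s)|
      ≤ C * η := by
  set J : ℝ → ℝ := fun u => ∫ x, φ x * g (k * (ℓ x + u) + b) ∂μ
  have hP : 0 < L / k := by positivity
  have hJ0 : J 0 = ∫ x, φ x * g (k * ℓ x + b) ∂μ := by simp [J]
  have hJ : ∀ u ∈ Set.Ioc 0 (L / k), ‖J 0 - J u‖ ≤ C * η := by
    intro u hu
    have hφu := hφ.comp_add_left (-(u • e))
    have hgm : Measurable fun x => g (k * ℓ x + b) := hg.comp (by fun_prop)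
    have hJu : J u = ∫ x, φ (-(u • e) + x) * g (k * ℓ x + b) ∂μ :=
      integral_mul_comp_clm_add_eq_integral_translate ℓ he u
    rw [Real.norm_eq_abs, abs_sub_comm, hJ0, hJu,
      ← integral_sub (hφu.mul_bdd hgm.aestronglyMeasurable (ae_of_all _ fun x => hC _))
        (hφ.mul_bdd hgm.aestronglyMeasurable (ae_of_all _ fun x => hC _))]
    simp only [← sub_mul]
    exact ((hφu.sub hφ).abs_integral_mul_le fun x => hC _).trans
      (mul_le_mul_of_nonneg_left (hη u hu) ((abs_nonneg _).trans (hC 0)))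
  have hJint : IntegrableOn J (Set.Ioc 0 (L / k)) :=
    (integrable_prod_mul_comp_clm_add hφ hg hC ℓ).integral_prod_right
  have hmean : J 0 - (∫ x, φ x ∂μ) * ((1 / L) * ∫ s in Set.Ioc 0 L, g s)
      = (L / k)⁻¹ * ∫ u in Set.Ioc 0 (L / k), (J 0 - J u) := by
    rw [integral_sub (integrable_const (J 0)) hJint, setIntegral_const,
      setIntegral_integral_mul_comp_clm_add hφ hg hC hper hL.le hk ℓ,
      Real.volume_real_Ioc_of_le hP.le, sub_zero, smul_eq_mul]
    field_simp
  rw [← hJ0, hmean, abs_mul, abs_inv, abs_of_pos hP]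
  calc (L / k)⁻¹ * |∫ u in Set.Ioc 0 (L / k), (J 0 - J u)|
      ≤ (L / k)⁻¹ * (C * η * volume.real (Set.Ioc 0 (L / k))) :=
        mul_le_mul_of_nonneg_left (norm_setIntegral_le_of_norm_le_const measure_Ioc_lt_top hJ)
          (by positivity)
    _ = C * η := by rw [Real.volume_real_Ioc_of_le hP.le, sub_zero]; field_simp

theorem tendstoUniformly_integral_mul_comp_clm [SFinite μ] [μ.IsAddLeftInvariant]
    [IsLocallyFiniteMeasure μ] [μ.InnerRegularCompactLTTop] (hφ : Integrable φ μ)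
    (hg : Measurable g) (hC : ∀ s, |g s| ≤ C) (hper : Function.Periodic g L) (hL : 0 < L)
    {ℓ : E →L[ℝ] ℝ} (hℓ : ℓ ≠ 0) :
    TendstoUniformly (fun k b => ∫ x, φ x * g (k * ℓ x + b) ∂μ)
      (fun _ => (∫ x, φ x ∂μ) * ((1 / L) * ∫ s in Set.Ioc 0 L, g s)) atTop := by
  obtain ⟨e₀, he₀⟩ : ∃ e₀, ℓ e₀ ≠ 0 := by
    by_contra! h
    exact hℓ (ContinuousLinearMap.ext h)
  have he : ℓ ((ℓ e₀)⁻¹ • e₀) = 1 := by simp [he₀]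
  have hC0 : 0 ≤ C := (abs_nonneg _).trans (hC 0)
  rw [Metric.tendstoUniformly_iff]
  intro ε hε
  have hη : 0 < ε / (C + 1) := by positivity
  have hCη : C * (ε / (C + 1)) < ε := by
    rw [mul_div_assoc', div_lt_iff₀ (by positivity)]
    nlinarith
  have hshift : Tendsto (fun u : ℝ => -(u • (ℓ e₀)⁻¹ • e₀)) (𝓝 0) (𝓝 0) :=
    (continuous_id.smul continuous_const).neg.tendsto' 0 0 (by simp)
  obtain ⟨δ, hδ, hδη⟩ := Metric.eventually_nhds_iff.1
    ((hφ.tendsto_integral_norm_comp_add_sub.comp hshift).eventually (gt_mem_nhds hη))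
  filter_upwards [eventually_gt_atTop (L / δ), eventually_gt_atTop 0] with k hkδ hk b
  rw [dist_comm, Real.dist_eq]
  refine (abs_integral_mul_comp_clm_sub_le hφ hg hC hper hL hk ℓ he fun u hu =>
    (hδη ?_).le).trans_lt hCη
  rw [Real.dist_eq, sub_zero, abs_of_pos hu.1]
  calc u ≤ L / k := hu.2
    _ < δ := by rw [div_lt_iff₀ hk]; rw [div_lt_iff₀ hδ] at hkδ; linarith

end PlaneWave

/-- plane waves h(n(t,x)·ξ) with wave direction not parallel to
the time axis generate, uniformly in t, the homogeneous Young measure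
(1/L)dx|_[0,L) ∘ h⁻¹. -/
theorem plane_wave_young_measure {d : ℕ} (L : ℝ) (hL : 0 < L)
    (h : ℝ → ℝ) (hhm : Measurable h) (hhb : ∃ Cb, ∀ s, |h s| ≤ Cb)
    (hper : Function.Periodic h L)
    (ξ0 : ℝ) (ξ' : EuclideanSpace ℝ (Fin d)) (hξ : ξ' ≠ 0)
    (f : ℝ → ℝ) (hf : Continuous f)
    (φ : EuclideanSpace ℝ (Fin d) → ℝ) (hφ : Integrable φ) :
    ∀ ε > (0 : ℝ), ∃ N : ℕ, ∀ n ≥ N, ∀ t : ℝ,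
      |(∫ x, φ x * f (h ((n : ℝ) * (t * ξ0 + inner ℝ x ξ'))))
        - (∫ x, φ x) * ((1 / L) * ∫ s in Set.Ioc (0 : ℝ) L, f (h s))| < ε := by
  obtain ⟨Cb, hCb⟩ := hhb
  obtain ⟨C, hC⟩ : ∃ C, ∀ s, |f (h s)| ≤ C := by
    obtain ⟨C, hC⟩ :=
      isCompact_Icc.exists_bound_of_continuousOn (hf.continuousOn (s := Set.Icc (-Cb) Cb))
    exact ⟨C, fun s => hC _ (abs_le.1 (hCb s))⟩
  have hℓ : innerSL ℝ ξ' ≠ 0 := fun h0 => hξ (by simpa using congrArg (· ξ') h0)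
  have hunif := Metric.tendstoUniformly_iff.1 (tendstoUniformly_integral_mul_comp_clm hφ
    (hf.measurable.comp hhm) hC (hper.comp f) hL hℓ)
  intro ε hε
  obtain ⟨N, hN⟩ := eventually_atTop.1 (tendsto_natCast_atTop_atTop.eventually (hunif ε hε))
  refine ⟨N, fun n hn t => ?_⟩
  have harg : ∀ x, (n : ℝ) * (t * ξ0 + inner ℝ x ξ') = n * innerSL ℝ ξ' x + n * (t * ξ0) :=
    fun x => by rw [innerSL_apply_apply, real_inner_comm]; ring
  have hnt := hN n hn (n * (t * ξ0))
  rw [dist_comm, Real.dist_eq] at hnt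
  simpa only [harg, Function.comp_apply] using hnt
end
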